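/- arXiv:1512.03294 — 3 statements merged into one kernel-verified Lean document; each statement's English description precedes it below -/
import Mathlib

section
/- Let (X,T) be a TDS which is mean sensitive, totally transitive (i.e., T^n is topologically transitive for every n ≥ 1), and contains a mean proximal pair consisting of a transitive point and a periodic point. Then (X,T) is densely mean Li-Yorke chaotic: there exist η > 0 and a dense uncountable subset K ⊂ X which is a mean Li-Yorke set with modulus η. -/
open Filter Metric Set

/-- Birkhoff average of the distance between the orbits of `x` and `y`. -/
noncomputable def birkhoffAvg {X : Type*} [PseudoMetricSpace X]
    (T : X → X) (x y : X) (N : ℕ) : ℝ :=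
  (∑ k ∈ Finset.range N, dist (T^[k] x) (T^[k] y)) / N

/-- A pair `(x,y)` is mean proximal if
`liminf_{N→∞} (1/N) ∑_{k<N} d(T^k x, T^k y) = 0`. -/
def MeanProximalPair {X : Type*} [PseudoMetricSpace X] (T : X → X) (x y : X) : Prop :=
  liminf (birkhoffAvg T x y) atTop = 0

/-- `(X,T)` is mean sensitive. -/
def MeanSensitive {X : Type*} [PseudoMetricSpace X] (T : X → X) : Prop :=
  ∃ δ > (0 : ℝ), ∀ x : X, ∀ ε > (0 : ℝ), ∃ y ∈ ball x ε,
    δ < limsup (birkhoffAvg T x y) atTop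

/-- `K` is a mean Li-Yorke set with modulus `η`. -/
def MeanLiYorkeSetMod {X : Type*} [PseudoMetricSpace X]
    (T : X → X) (η : ℝ) (K : Set X) : Prop :=
  ∀ x ∈ K, ∀ y ∈ K, x ≠ y →
    MeanProximalPair T x y ∧ η ≤ limsup (birkhoffAvg T x y) atTop

open Function PiNat Topology

/-!
Let `δ` be the sensitivity constant and `t` the period of `p`. The mean Li-Yorke pairs of modulus
`δ / 2` contain the `G_δ` set `⋂ₙ Vₙ ⊆ X × X`, where `Vₙ` consists of the pairs whose `N`-th
Birkhoff average of the distance drops below `1 / (n + 1)` at some `N ≥ n` and exceeds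
`δ / 2 - 1 / (n + 1)` at some `N ≥ n`. Each `Vₙ` is open and dense. The first condition is dense
because `T^a q` and `T^(a + m t) q` both shadow the orbit of `T^a p` on average, and the
transitivity of `T^t` together with the dense orbit of `q` places such pairs in any product of open
sets. The second is dense by mean sensitivity and the triangle inequality for the upper mean
distance. A Mycielski-type Cantor scheme, run on all branches at once with a new branch started
inside each basic open set, then yields a dense uncountable set any two distinct points of which
form a pair in `⋂ₙ Vₙ`.
-/

section Mycielski
variable {X : Type*} [TopologicalSpace X]

theorem isOpenMap_apply_prod_apply {ι : Type*} {i j : ι} (hij : i ≠ j) :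
    IsOpenMap fun x : ι → X => (x i, x j) := by
  classical
  exact (IsOpenMap.id.prodMap (isOpenMap_eval (⟨j, hij.symm⟩ : {k // k ≠ i}))).comp
    (Homeomorph.piSplitAt i fun _ => X).isOpenMap

theorem exists_isClosed_pairwise_prod_subset [RegularSpace X] {ι : Type*} [Finite ι]
    {W : Set (X × X)} (hWo : IsOpen W) (hWd : Dense W) {U : ι → Set X}
    (hUo : ∀ i, IsOpen (U i)) (hU : ∀ i, (U i).Nonempty) :
    ∃ C : ι → Set X, (∀ i, IsClosed (C i) ∧ (interior (C i)).Nonempty ∧ C i ⊆ U i) ∧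
      ∀ i j, i ≠ j → C i ×ˢ C j ⊆ W := by
  classical
  set P : Set (ι → X) :=
    ⋂ p : {p : ι × ι // p.1 ≠ p.2}, (fun x : ι → X => (x p.1.1, x p.1.2)) ⁻¹' W
  have hPo : IsOpen P := isOpen_iInter_of_finite fun p => hWo.preimage (by fun_prop)
  have hPd : Dense P := by
    rw [show P = ⋂₀ range _ from (sInter_range _).symm]
    refine (finite_range _).dense_sInter (forall_mem_range.2 fun p => hWo.preimage (by fun_prop))
      (forall_mem_range.2 fun p => hWd.preimage (isOpenMap_apply_prod_apply p.2))
  obtain ⟨x, hxU, hxP⟩ := hPd.inter_open_nonempty (univ.pi U)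
    (isOpen_set_pi finite_univ fun i _ => hUo i) (univ_pi_nonempty_iff.2 hU)
  obtain ⟨I, t, ht, hIt⟩ := mem_pi'.1 (nhds_pi (a := x) ▸ hPo.mem_nhds hxP)
  have hC : ∀ i, ∃ C ∈ 𝓝 (x i), IsClosed C ∧ C ⊆ t i ∩ U i := fun i =>
    exists_mem_nhds_isClosed_subset (inter_mem (ht i) ((hUo i).mem_nhds (hxU i trivial)))
  choose C hCx hCc hCt using hC
  refine ⟨C, fun i => ⟨hCc i, ⟨x i, mem_interior_iff_mem_nhds.2 (hCx i)⟩,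
    fun y hy => (hCt i hy).2⟩, fun i j hij ⟨y, z⟩ ⟨hy, hz⟩ => ?_⟩
  set w := update (update x i y) j z
  have hw : w ∈ univ.pi C := by
    refine update_mem_pi_iff_of_mem ?_ |>.2 fun _ => hz
    exact update_mem_pi_iff_of_mem (fun k _ => mem_of_mem_nhds (hCx k)) |>.2 fun _ => hy
  have hwP : w ∈ P := hIt fun k _ => (hCt k (hw k trivial)).1
  simpa [w, hij, hij.symm] using mem_iInter.1 hwP ⟨(i, j), hij⟩

/-- One stage of the Cantor scheme: `A'` has a node for every list of length `≤ n`; the empty list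
starts a new branch inside `O`, and `b :: s` refines the node `s` of `A`. -/
structure IsMycielskiStep {β : Type*} (W : Set (X × X)) (O : Set X) (n : ℕ)
    (A A' : List β → Set X) : Prop where
  isClosed : ∀ s : List β, s.length ≤ n → IsClosed (A' s)
  interior_nonempty : ∀ s : List β, s.length ≤ n → (interior (A' s)).Nonempty
  nil_subset : A' [] ⊆ O
  cons_subset : ∀ b s, s.length < n → A' (b :: s) ⊆ A s
  prod_subset : ∀ s t : List β, s.length ≤ n → t.length ≤ n → s ≠ t → A' s ×ˢ A' t ⊆ W

theorem exists_isMycielskiStep [RegularSpace X] {β : Type*} [Finite β] {W : Set (X × X)}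
    (hWo : IsOpen W) (hWd : Dense W) {O : Set X} (hOo : IsOpen O) (hO : O.Nonempty) {n : ℕ}
    {A : List β → Set X} (hA : ∀ s : List β, s.length < n → (interior (A s)).Nonempty) :
    ∃ A', IsMycielskiStep W O n A A' := by
  classical
  have : Finite {s : List β // s.length ≤ n} := (List.finite_length_le β n).to_subtype
  let U : List β → Set X := fun s => if s = [] then O else interior (A s.tail)
  have hUo : ∀ s, IsOpen (U s) := fun s => by
    by_cases hs : s = [] <;> simp [U, hs, hOo]
  have hU : ∀ s : List β, s.length ≤ n → (U s).Nonempty := by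
    rintro (_ | ⟨b, s⟩) hs
    · simpa [U] using hO
    · simpa [U] using hA s (by simpa using hs)
  obtain ⟨C, hC, hCW⟩ := exists_isClosed_pairwise_prod_subset hWo hWd
    (U := fun s : {s : List β // s.length ≤ n} => U s) (fun s => hUo s) (fun s => hU s s.2)
  refine ⟨fun s => if h : s.length ≤ n then C ⟨s, h⟩ else ∅, ⟨fun s hs => ?_, fun s hs => ?_,
    ?_, fun b s hs => ?_, fun s t hs ht hst => ?_⟩⟩
  · simpa [hs] using (hC ⟨s, hs⟩).1
  · simpa [hs] using (hC ⟨s, hs⟩).2.1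
  · simpa [U] using (hC ⟨[], Nat.zero_le n⟩).2.2
  · have h := (hC ⟨b :: s, hs⟩).2.2
    simp only [U, reduceCtorEq, if_false, List.tail_cons] at h
    simpa [Nat.succ_le_of_lt hs] using h.trans interior_subset
  · simpa [hs, ht] using hCW ⟨s, hs⟩ ⟨t, ht⟩ (fun h => hst (congrArg Subtype.val h))

theorem exists_seq_isMycielskiStep [RegularSpace X] {β : Type*} [Finite β]
    {W : ℕ → Set (X × X)} (hWo : ∀ n, IsOpen (W n)) (hWd : ∀ n, Dense (W n))
    {O : ℕ → Set X} (hOo : ∀ n, IsOpen (O n)) (hO : ∀ n, (O n).Nonempty) :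
    ∃ A : ℕ → List β → Set X, ∀ n, IsMycielskiStep (W n) (O n) n (A n) (A (n + 1)) := by
  have step : ∀ n (A : List β → Set X), ∃ A',
      (∀ s : List β, s.length < n → (interior (A s)).Nonempty) →
        IsMycielskiStep (W n) (O n) n A A' := fun n A => by
    by_cases hA : ∀ s : List β, s.length < n → (interior (A s)).Nonempty
    · exact (exists_isMycielskiStep (hWo n) (hWd n) (hOo n) (hO n) hA).imp fun _ h _ => h
    · exact ⟨A, fun h => absurd h hA⟩
  choose next hnext using step
  let A : ℕ → List β → Set X := fun n => Nat.rec (fun _ => univ) next n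
  have hA : ∀ n (s : List β), s.length < n → (interior (A n s)).Nonempty := by
    intro n
    induction n with
    | zero => exact fun s hs => absurd hs (Nat.not_lt_zero _)
    | succ n ih =>
      exact fun s hs => (hnext n (A n) ih).interior_nonempty s (Nat.lt_succ_iff.1 hs)
  exact ⟨A, fun n => hnext n (A n) (hA n)⟩

theorem exists_add_eq_and_res_ne {α : Type*} {i i' : ℕ} {σ σ' : ℕ → α}
    (h : (i, σ) ≠ (i', σ')) (n : ℕ) :
    ∃ m m', i + m = i' + m' ∧ n ≤ i + m ∧ res σ m ≠ res σ' m' := by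
  rcases eq_or_ne i i' with rfl | hi
  · obtain ⟨k, hk⟩ := ne_iff.1 fun hσ : σ = σ' => h (hσ ▸ rfl)
    exact ⟨n + k + 1, n + k + 1, rfl, by omega, fun hres => hk (res_eq_res.1 hres (by omega))⟩
  · refine ⟨n + i', n + i, by omega, by omega, fun hres => hi ?_⟩
    have := congrArg List.length hres
    simp only [res_length] at this
    omega

theorem exists_pairwise_mem_of_isOpen_dense [CompactSpace X] [RegularSpace X]
    {V : ℕ → Set (X × X)} (hVo : ∀ n, IsOpen (V n)) (hVd : ∀ n, Dense (V n))
    {O : ℕ → Set X} (hOo : ∀ i, IsOpen (O i)) (hO : ∀ i, (O i).Nonempty) :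
    ∃ g : ℕ × (ℕ → Bool) → X, (∀ i σ, g (i, σ) ∈ O i) ∧
      Pairwise fun a b => ∀ n, (g a, g b) ∈ V n := by
  set W : ℕ → Set (X × X) := fun n => ⋂ k ≤ n, V k
  have hWo : ∀ n, IsOpen (W n) := fun n => (finite_Iic n).isOpen_biInter fun k _ => hVo k
  have hWd : ∀ n, Dense (W n) := fun n => by
    rw [show W n = ⋂₀ (V '' Iic n) from (sInter_image _ _).symm]
    exact ((finite_Iic n).image V).dense_sInter (forall_mem_image.2 fun k _ => hVo k)
      (forall_mem_image.2 fun k _ => hVd k)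
  obtain ⟨A, hA⟩ := exists_seq_isMycielskiStep (β := Bool) hWo hWd hOo hO
  -- the branch `(i, σ)` starts at stage `i + 1`, where it is the node `[]`
  have hbranch : ∀ i (σ : ℕ → Bool), (⋂ m, A (i + m + 1) (res σ m)).Nonempty := by
    intro i σ
    have hcl : ∀ m, IsClosed (A (i + m + 1) (res σ m)) := fun m =>
      (hA (i + m)).isClosed _ (by simp [res_length])
    exact IsCompact.nonempty_iInter_of_sequence_nonempty_isCompact_isClosed _
      (fun m => (hA (i + m + 1)).cons_subset (σ m) (res σ m) (by simp [res_length]))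
      (fun m => ((hA (i + m)).interior_nonempty _ (by simp [res_length])).mono interior_subset)
      (hcl 0).isCompact hcl
  choose g hg using hbranch
  refine ⟨fun a => g a.1 a.2, fun i σ => (hA i).nil_subset (mem_iInter.1 (hg i σ) 0), ?_⟩
  rintro ⟨i, σ⟩ ⟨i', σ'⟩ hne n
  obtain ⟨m, m', hmm', hn, hres⟩ := exists_add_eq_and_res_ne hne n
  have h' := mem_iInter.1 (hg i' σ') m'
  rw [← hmm'] at h'
  exact mem_iInter₂.1 ((hA (i + m)).prod_subset _ _ (by simp [res_length])
    (by simp [res_length]; omega) hres ⟨mem_iInter.1 (hg i σ) m, h'⟩) n hn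

theorem exists_denseRange_pairwise_mem [CompactSpace X] [RegularSpace X]
    [SecondCountableTopology X] [Nonempty X] {V : ℕ → Set (X × X)}
    (hVo : ∀ n, IsOpen (V n)) (hVd : ∀ n, Dense (V n)) :
    ∃ g : ℕ × (ℕ → Bool) → X, DenseRange g ∧ Pairwise fun a b => ∀ n, (g a, g b) ∈ V n := by
  obtain ⟨B, hBc, hBe, hB⟩ := TopologicalSpace.exists_countable_basis X
  obtain ⟨O, rfl⟩ := hBc.exists_eq_range <|
    let ⟨v, hv, _⟩ := hB.exists_subset_of_mem_open (mem_univ (Classical.arbitrary X)) isOpen_univ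
    ⟨v, hv⟩
  obtain ⟨g, hgO, hg⟩ := exists_pairwise_mem_of_isOpen_dense hVo hVd
    (fun i => hB.isOpen (mem_range_self i))
    (fun i => nonempty_iff_ne_empty.2 fun h => hBe (h ▸ mem_range_self i))
  refine ⟨g, hB.dense_iff.2 ?_, hg⟩
  rintro _ ⟨i, rfl⟩ -
  exact ⟨g (i, fun _ => false), hgO i _, mem_range_self _⟩

theorem exists_dense_not_countable_pairwise_mem [CompactSpace X] [RegularSpace X]
    [SecondCountableTopology X] [Nonempty X] {V : ℕ → Set (X × X)}
    (hVo : ∀ n, IsOpen (V n)) (hVd : ∀ n, Dense (V n)) (hdiag : ∀ x, ∃ n, (x, x) ∉ V n) :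
    ∃ K : Set X, Dense K ∧ ¬K.Countable ∧ K.Pairwise fun x y => ∀ n, (x, y) ∈ V n := by
  obtain ⟨g, hg, hgV⟩ := exists_denseRange_pairwise_mem hVo hVd
  have hinj : Injective g := fun a b hab => by_contra fun hne =>
    let ⟨n, hn⟩ := hdiag (g a)
    hn (hab ▸ hgV hne n)
  have : Uncountable (ℕ → Bool) :=
    Cardinal.aleph0_lt_mk_iff.1 (by simpa using Cardinal.cantor Cardinal.aleph0)
  refine ⟨range g, hg, fun hc => ?_, ?_⟩
  · exact not_countable (countable_univ_iff.1 (by simpa using hc.preimage hinj))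
  · rintro _ ⟨a, rfl⟩ _ ⟨b, rfl⟩ hab
    exact hgV (ne_of_apply_ne g hab)

end Mycielski

section Birkhoff
variable {X : Type*} [PseudoMetricSpace X] (T : X → X)

theorem birkhoffAvg_nonneg (x y : X) (N : ℕ) : 0 ≤ birkhoffAvg T x y N :=
  div_nonneg (Finset.sum_nonneg fun _ _ => dist_nonneg) N.cast_nonneg

theorem birkhoffAvg_comm (x y : X) : birkhoffAvg T x y = birkhoffAvg T y x := by
  ext N
  simp only [birkhoffAvg, dist_comm (T^[_] x)]

theorem limsup_birkhoffAvg_self (x : X) : limsup (birkhoffAvg T x x) atTop = 0 := by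
  have : birkhoffAvg T x x = fun _ => 0 := by
    ext N
    simp [birkhoffAvg]
  rw [this, limsup_const]

theorem birkhoffAvg_le_add (x y z : X) (N : ℕ) :
    birkhoffAvg T x z N ≤ birkhoffAvg T x y N + birkhoffAvg T y z N := by
  rw [birkhoffAvg, birkhoffAvg, birkhoffAvg, ← add_div, ← Finset.sum_add_distrib]
  gcongr with k
  exact dist_triangle _ _ _

theorem continuous_birkhoffAvg {T : X → X} (hT : Continuous T) (N : ℕ) :
    Continuous fun z : X × X => birkhoffAvg T z.1 z.2 N := by
  unfold birkhoffAvg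
  fun_prop

theorem sum_dist_iterate_iterate_le (x y : X) {s M : ℕ} (hs : s ≤ M) (N : ℕ) :
    ∑ k ∈ Finset.range N, dist (T^[k] (T^[s] x)) (T^[k] (T^[s] y)) ≤
      ∑ k ∈ Finset.range (N + M), dist (T^[k] x) (T^[k] y) := by
  calc ∑ k ∈ Finset.range N, dist (T^[k] (T^[s] x)) (T^[k] (T^[s] y))
      = ∑ k ∈ Finset.range N, dist (T^[s + k] x) (T^[s + k] y) := by
        simp only [← iterate_add_apply, Nat.add_comm s]
    _ ≤ ∑ k ∈ Finset.range (s + N), dist (T^[k] x) (T^[k] y) := by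
        rw [Finset.sum_range_add]
        exact le_add_of_nonneg_left (Finset.sum_nonneg fun _ _ => dist_nonneg)
    _ ≤ ∑ k ∈ Finset.range (N + M), dist (T^[k] x) (T^[k] y) :=
        Finset.sum_le_sum_of_subset_of_nonneg (Finset.range_subset_range.2 (by omega))
          fun _ _ _ => dist_nonneg

theorem sum_dist_iterate_iterate_le_of_isPeriodicPt {q p : X} {c : ℕ} (hp : IsPeriodicPt T c p)
    (a N : ℕ) :
    ∑ k ∈ Finset.range N, dist (T^[k] (T^[a] q)) (T^[k] (T^[c] (T^[a] q))) ≤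
      2 * ∑ k ∈ Finset.range (N + (c + a)), dist (T^[k] q) (T^[k] p) := by
  have hpa : T^[c] (T^[a] p) = T^[a] p := (hp.apply_iterate a).eq
  calc ∑ k ∈ Finset.range N, dist (T^[k] (T^[a] q)) (T^[k] (T^[c] (T^[a] q)))
      ≤ ∑ k ∈ Finset.range N, (dist (T^[k] (T^[a] q)) (T^[k] (T^[a] p)) +
          dist (T^[k] (T^[c + a] q)) (T^[k] (T^[c + a] p))) := by
        gcongr with k
        rw [iterate_add_apply, iterate_add_apply, hpa]
        exact dist_triangle_right _ _ _
    _ ≤ 2 * ∑ k ∈ Finset.range (N + (c + a)), dist (T^[k] q) (T^[k] p) := by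
        rw [Finset.sum_add_distrib, two_mul]
        exact add_le_add (sum_dist_iterate_iterate_le T q p (by omega) N)
          (sum_dist_iterate_iterate_le T q p le_rfl N)

theorem isBoundedUnder_ge_birkhoffAvg (x y : X) :
    IsBoundedUnder (· ≥ ·) atTop (birkhoffAvg T x y) :=
  isBoundedUnder_of ⟨0, birkhoffAvg_nonneg T x y⟩

variable [BoundedSpace X]

theorem birkhoffAvg_le_diam (x y : X) (N : ℕ) : birkhoffAvg T x y N ≤ diam (univ : Set X) := by
  refine div_le_of_le_mul₀ N.cast_nonneg diam_nonneg ?_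
  simpa [mul_comm] using Finset.sum_le_card_nsmul (Finset.range N) _ _ fun k _ =>
    dist_le_diam_of_mem BoundedSpace.bounded_univ (mem_univ (T^[k] x)) (mem_univ (T^[k] y))

theorem isBoundedUnder_le_birkhoffAvg (x y : X) :
    IsBoundedUnder (· ≤ ·) atTop (birkhoffAvg T x y) :=
  isBoundedUnder_of ⟨_, birkhoffAvg_le_diam T x y⟩

theorem meanProximalPair_iff_frequently {x y : X} :
    MeanProximalPair T x y ↔ ∀ ε > 0, ∃ᶠ N in atTop, birkhoffAvg T x y N < ε := by
  have hu := isBoundedUnder_le_birkhoffAvg T x y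
  have hl := isBoundedUnder_ge_birkhoffAvg T x y
  rw [MeanProximalPair, ← liminf_le_iff hu.isCoboundedUnder_ge hl, le_antisymm_iff,
    and_iff_left (le_liminf_of_le hu.isCoboundedUnder_ge
      (Eventually.of_forall (birkhoffAvg_nonneg T x y)))]

theorem limsup_birkhoffAvg_le_add (x y z : X) :
    limsup (birkhoffAvg T x z) atTop ≤
      limsup (birkhoffAvg T x y) atTop + limsup (birkhoffAvg T y z) atTop := by
  refine (limsup_le_limsup (Eventually.of_forall (birkhoffAvg_le_add T x y z))
    (isBoundedUnder_ge_birkhoffAvg T x z).isCoboundedUnder_le ?_).trans ?_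
  · exact isBoundedUnder_of ⟨2 * diam (univ : Set X), fun N => by
      linarith [birkhoffAvg_le_diam T x y N, birkhoffAvg_le_diam T y z N]⟩
  · exact limsup_add_le (isBoundedUnder_ge_birkhoffAvg T x y)
      (isBoundedUnder_le_birkhoffAvg T x y)
      (isBoundedUnder_ge_birkhoffAvg T y z).isCoboundedUnder_le
      (isBoundedUnder_le_birkhoffAvg T y z)

/-- Both `T^[a] q` and `T^[c + a] q` shadow the orbit of `T^[a] p` on average, and one partial sum
of the pair `(q, p)` controls both at the same times. -/
theorem MeanProximalPair.iterate_iterate_of_isPeriodicPt {q p : X} {c : ℕ}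
    (hqp : MeanProximalPair T q p) (hp : IsPeriodicPt T c p) (a : ℕ) :
    MeanProximalPair T (T^[a] q) (T^[c] (T^[a] q)) := by
  set M := c + a
  rw [meanProximalPair_iff_frequently] at hqp ⊢
  intro ε hε
  have hshift : ∃ᶠ N in atTop, birkhoffAvg T q p (N + M) < ε / 4 :=
    (tendsto_sub_atTop_nat M).frequently <|
      ((hqp (ε / 4) (by positivity)).and_eventually (eventually_ge_atTop M)).mono
        fun N hN => by rw [Nat.sub_add_cancel hN.2]; exact hN.1
  refine (hshift.and_eventually (eventually_ge_atTop (M + 1))).mono fun N ⟨hN, hNM⟩ => ?_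
  have hN0 : (0 : ℝ) < N := by exact_mod_cast (by omega : 0 < N)
  have hNM' : ((N + M : ℕ) : ℝ) ≤ 2 * N := by exact_mod_cast (by omega : N + M ≤ 2 * N)
  calc birkhoffAvg T (T^[a] q) (T^[c] (T^[a] q)) N
      ≤ 2 * (∑ k ∈ Finset.range (N + M), dist (T^[k] q) (T^[k] p)) / N :=
        div_le_div_of_nonneg_right
          (sum_dist_iterate_iterate_le_of_isPeriodicPt T hp a N) hN0.le
    _ = 2 * (birkhoffAvg T q p (N + M) * ((N + M : ℕ) : ℝ)) / N := by
        rw [birkhoffAvg, div_mul_cancel₀ _ (by norm_cast; omega)]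
    _ ≤ 2 * (birkhoffAvg T q p (N + M) * (2 * N)) / N := by
        gcongr
        exact birkhoffAvg_nonneg T q p _
    _ = 4 * birkhoffAvg T q p (N + M) := by field_simp; ring
    _ < ε := by linarith

end Birkhoff

section Transitivity
variable {X : Type*} [TopologicalSpace X]

theorem Dense.exists_mem_iterate_mem {S : X → X} (hS : Continuous S)
    (htrans : ∀ U V : Set X, IsOpen U → IsOpen V → U.Nonempty → V.Nonempty →
      ∃ m : ℕ, (S^[m] ⁻¹' U ∩ V).Nonempty)
    {D : Set X} (hD : Dense D) {U V : Set X} (hU : IsOpen U) (hV : IsOpen V)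
    (hUne : U.Nonempty) (hVne : V.Nonempty) : ∃ x ∈ D ∩ U, ∃ m, S^[m] x ∈ V := by
  obtain ⟨m, hm⟩ := htrans V U hV hU hVne hUne
  obtain ⟨x, ⟨hxV, hxU⟩, hxD⟩ := hD.inter_open_nonempty _ ((hV.preimage (hS.iterate m)).inter hU) hm
  exact ⟨x, ⟨hxD, hxU⟩, m, hxV⟩

end Transitivity

section MeanLiYorke
variable {X : Type*} [PseudoMetricSpace X] (T : X → X)

def proximalApprox (n : ℕ) : Set (X × X) :=
  {z | ∃ N ≥ n, birkhoffAvg T z.1 z.2 N < 1 / (n + 1)}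

def scrambledApprox (η : ℝ) (n : ℕ) : Set (X × X) :=
  {z | ∃ N ≥ n, η - 1 / (n + 1) < birkhoffAvg T z.1 z.2 N}

variable {T}

theorem isOpen_proximalApprox (hT : Continuous T) (n : ℕ) : IsOpen (proximalApprox T n) := by
  refine isOpen_iff_mem_nhds.2 fun z ⟨N, hN, hlt⟩ => mem_of_superset ?_ fun w hw => ⟨N, hN, hw⟩
  exact (isOpen_lt (continuous_birkhoffAvg hT N) continuous_const).mem_nhds hlt

theorem isOpen_scrambledApprox (hT : Continuous T) (η : ℝ) (n : ℕ) :
    IsOpen (scrambledApprox T η n) := by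
  refine isOpen_iff_mem_nhds.2 fun z ⟨N, hN, hlt⟩ => mem_of_superset ?_ fun w hw => ⟨N, hN, hw⟩
  exact (isOpen_lt continuous_const (continuous_birkhoffAvg hT N)).mem_nhds hlt

variable [BoundedSpace X]

theorem meanProximalPair_of_forall_mem_proximalApprox {x y : X}
    (h : ∀ n, (x, y) ∈ proximalApprox T n) : MeanProximalPair T x y := by
  refine (meanProximalPair_iff_frequently T).2 fun ε hε => frequently_atTop.2 fun m => ?_
  obtain ⟨k, hk⟩ := exists_nat_one_div_lt hε
  obtain ⟨N, hN, hlt⟩ := h (max m k)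
  refine ⟨N, le_of_max_le_left hN, hlt.trans (lt_of_le_of_lt ?_ hk)⟩
  gcongr
  exact_mod_cast le_max_right m k

theorem le_limsup_of_forall_mem_scrambledApprox {x y : X} {η : ℝ}
    (h : ∀ n, (x, y) ∈ scrambledApprox T η n) : η ≤ limsup (birkhoffAvg T x y) atTop := by
  refine (le_limsup_iff (isBoundedUnder_ge_birkhoffAvg T x y).isCoboundedUnder_le
    (isBoundedUnder_le_birkhoffAvg T x y)).2 fun c hc => frequently_atTop.2 fun m => ?_
  obtain ⟨k, hk⟩ := exists_nat_one_div_lt (sub_pos.2 hc)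
  obtain ⟨N, hN, hlt⟩ := h (max m k)
  refine ⟨N, le_of_max_le_left hN, lt_of_le_of_lt ?_ hlt⟩
  have : 1 / ((max m k : ℕ) + 1 : ℝ) ≤ 1 / (k + 1) := by
    gcongr
    exact_mod_cast le_max_right m k
  linarith

theorem exists_not_mem_scrambledApprox_self {η : ℝ} (hη : 0 < η) (x : X) :
    ∃ n, (x, x) ∉ scrambledApprox T η n := by
  by_contra! h
  have := le_limsup_of_forall_mem_scrambledApprox h
  rw [limsup_birkhoffAvg_self] at this
  linarith

theorem dense_proximalApprox (hT : Continuous T) {t : ℕ}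
    (htrans : ∀ U V : Set X, IsOpen U → IsOpen V → U.Nonempty → V.Nonempty →
      ∃ m : ℕ, ((T^[t])^[m] ⁻¹' U ∩ V).Nonempty)
    {q p : X} (hq : Dense (range fun n : ℕ => T^[n] q)) (hp : IsPeriodicPt T t p)
    (hqp : MeanProximalPair T q p) (n : ℕ) : Dense (proximalApprox T n) := by
  refine Metric.dense_iff.2 fun ⟨a, b⟩ r hr => ?_
  obtain ⟨_, ⟨⟨k, rfl⟩, hka⟩, m, hmb⟩ := hq.exists_mem_iterate_mem (hT.iterate t) htrans
    (isOpen_ball (x := a)) (isOpen_ball (x := b)) (nonempty_ball.2 hr) (nonempty_ball.2 hr)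
  rw [← iterate_mul] at hmb
  have hpair := hqp.iterate_iterate_of_isPeriodicPt T (hp.mul_const m) k
  obtain ⟨N, hN, hlt⟩ := ((meanProximalPair_iff_frequently T).1 hpair (1 / (n + 1))
    (by positivity)).forall_exists_of_atTop n
  exact ⟨_, ball_prod_same a b r ▸ mk_mem_prod hka hmb, N, hN, hlt⟩

theorem exists_mem_ball_half_le_limsup {δ : ℝ}
    (hδ : ∀ x : X, ∀ ε > (0 : ℝ), ∃ y ∈ ball x ε, δ < limsup (birkhoffAvg T x y) atTop)
    (a b : X) {ε : ℝ} (hε : 0 < ε) : ∃ x ∈ ball a ε, δ / 2 ≤ limsup (birkhoffAvg T x b) atTop := by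
  obtain ⟨u, hu, hau⟩ := hδ a ε hε
  by_cases hab : δ / 2 ≤ limsup (birkhoffAvg T a b) atTop
  · exact ⟨a, mem_ball_self hε, hab⟩
  · refine ⟨u, hu, ?_⟩
    have := limsup_birkhoffAvg_le_add T a b u
    rw [birkhoffAvg_comm T b u] at this
    linarith

theorem dense_scrambledApprox {δ : ℝ}
    (hδ : ∀ x : X, ∀ ε > (0 : ℝ), ∃ y ∈ ball x ε, δ < limsup (birkhoffAvg T x y) atTop)
    (n : ℕ) : Dense (scrambledApprox T (δ / 2) n) := by
  refine Metric.dense_iff.2 fun ⟨a, b⟩ r hr => ?_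
  obtain ⟨x, hx, hxb⟩ := exists_mem_ball_half_le_limsup hδ a b hr
  have hfreq : ∃ᶠ N in atTop, δ / 2 - 1 / (n + 1) < birkhoffAvg T x b N :=
    frequently_lt_of_lt_limsup (isBoundedUnder_ge_birkhoffAvg T x b).isCoboundedUnder_le
      (by have : (0 : ℝ) < 1 / (n + 1) := by positivity
          linarith)
  obtain ⟨N, hN, hlt⟩ := hfreq.forall_exists_of_atTop n
  exact ⟨(x, b), ball_prod_same a b r ▸ mk_mem_prod hx (mem_ball_self hr), N, hN, hlt⟩

end MeanLiYorke

/-- If a TDS is mean sensitive, totally transitive, and contains a mean proximal pair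
consisting of a transitive point and a periodic point, then it is densely mean Li-Yorke
chaotic: there are `η > 0` and a dense uncountable mean Li-Yorke set with modulus `η`. -/
theorem densely_mean_LiYorke_chaotic_of_totally_transitive
    {X : Type*} [MetricSpace X] [CompactSpace X] (T : X → X) (hT : Continuous T)
    (hsens : MeanSensitive T)
    (htt : ∀ n : ℕ, 1 ≤ n → ∀ U V : Set X, IsOpen U → IsOpen V →
      U.Nonempty → V.Nonempty → ∃ m : ℕ, ((T^[n])^[m] ⁻¹' U ∩ V).Nonempty)
    (q p : X)
    (hq : Dense (Set.range fun n : ℕ => T^[n] q))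
    (hp : ∃ t : ℕ, 1 ≤ t ∧ T^[t] p = p ∧ ∀ i : ℕ, 1 ≤ i → i < t → T^[i] p ≠ p)
    (hqp : MeanProximalPair T q p) :
    ∃ η > (0 : ℝ), ∃ K : Set X,
      Dense K ∧ ¬ K.Countable ∧ MeanLiYorkeSetMod T η K := by
  obtain ⟨δ, hδ, hsens⟩ := hsens
  obtain ⟨t, ht, htp, -⟩ := hp
  have : Nonempty X := ⟨q⟩
  set V : ℕ → Set (X × X) := fun n => proximalApprox T n ∩ scrambledApprox T (δ / 2) n
  have hVo : ∀ n, IsOpen (V n) := fun n =>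
    (isOpen_proximalApprox hT n).inter (isOpen_scrambledApprox hT _ n)
  have hVd : ∀ n, Dense (V n) := fun n =>
    (dense_proximalApprox hT (htt t ht) hq htp hqp n).inter_of_isOpen_left
      (dense_scrambledApprox hsens n) (isOpen_proximalApprox hT n)
  have hdiag : ∀ x, ∃ n, (x, x) ∉ V n := fun x =>
    (exists_not_mem_scrambledApprox_self (half_pos hδ) x).imp fun _ hn hV => hn hV.2
  obtain ⟨K, hKd, hKc, hK⟩ := exists_dense_not_countable_pairwise_mem hVo hVd hdiag
  exact ⟨δ / 2, half_pos hδ, K, hKd, hKc, fun x hx y hy hxy =>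
    ⟨meanProximalPair_of_forall_mem_proximalApprox fun n => (hK hx hy hxy n).1,
      le_limsup_of_forall_mem_scrambledApprox fun n => (hK hx hy hxy n).2⟩⟩
end

section
/- Let (X,T) be a TDS such that every (T×T)-invariant Borel probability measure λ on X × X satisfies λ(Δ_X) = 1, where Δ_X is the diagonal. Then (X,T) is mean asymptotic, i.e., every pair (x,y) ∈ X × X satisfies lim_{N→∞} (1/N) Σ_{k=0}^{N−1} d(T^k x, T^k y) = 0. -/
/-!
Krylov–Bogolyubov argument. Along any ultrafilter tending to infinity, the empirical measures of
the orbit of `(x, y)` under `T × T` converge weakly (the space of probability measures on the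
compact space `X × X` is compact), and the limit is `(T × T)`-invariant because pushing an
empirical measure forward only shifts its orbit segment by one step. By hypothesis the limit is
carried by the diagonal, where the distance vanishes, so the Cesàro averages of
`dist (T^[k] x) (T^[k] y)`, which are the integrals of the distance against the empirical
measures, tend to `0` along every such ultrafilter, hence along `atTop`.
-/

open Filter Metric Set MeasureTheory

open Topology BoundedContinuousFunction
open scoped ENNReal

theorem birkhoffAverage_comp_apply {α M : Type*} (R : Type*) [DivisionSemiring R]
    [AddCommMonoid M] [Module R M] (f : α → α) (g : α → M) (n : ℕ) (x : α) :
    birkhoffAverage R f (g ∘ f) n x = birkhoffAverage R f g n (f x) := by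
  simp only [birkhoffAverage, birkhoffSum, Function.comp_apply, ← Function.iterate_succ_apply',
    Function.iterate_succ_apply]

section EmpiricalMeasure

variable {E : Type*} [MeasurableSpace E]

/-- Uniform on the `n + 1` points `p, f p, …, f^[n] p`, so that it is a probability measure also
for `n = 0`. -/
noncomputable def empiricalMeasure (f : E → E) (p : E) (n : ℕ) : ProbabilityMeasure E :=
  ⟨((n + 1 : ℕ) : ℝ≥0∞)⁻¹ • ∑ k ∈ Finset.range (n + 1), Measure.dirac (f^[k] p),
    ⟨by simp [ENNReal.inv_mul_cancel]⟩⟩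

theorem integral_empiricalMeasure [MeasurableSingletonClass E] (f : E → E) (p : E) (n : ℕ)
    (g : E → ℝ) :
    ∫ q, g q ∂(empiricalMeasure f p n : Measure E) = birkhoffAverage ℝ f g (n + 1) p := by
  rw [empiricalMeasure, ProbabilityMeasure.coe_mk, integral_smul_measure,
    integral_finsetSum_measure fun k _ => integrable_dirac enorm_lt_top]
  simp only [ENNReal.toReal_inv, ENNReal.toReal_natCast, integral_dirac, birkhoffAverage,
    birkhoffSum, smul_eq_mul]

end EmpiricalMeasure

theorem measurePreserving_of_tendsto_empiricalMeasure {E : Type*} [MetricSpace E]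
    [MeasurableSpace E] [BorelSpace E] {f : E → E} (hf : Continuous f) {p : E}
    {l : Filter ℕ} [l.NeBot] (hl : l ≤ atTop) {ν : ProbabilityMeasure E}
    (hν : Tendsto (empiricalMeasure f p) l (𝓝 ν)) : MeasurePreserving f ν ν := by
  have hmap : Tendsto (fun n ↦ (empiricalMeasure f p n).map hf.measurable.aemeasurable) l
      (𝓝 ν) := by
    rw [ProbabilityMeasure.tendsto_iff_forall_integral_tendsto] at hν ⊢
    intro g
    have hshift : Tendsto (fun n ↦ birkhoffAverage ℝ f g (n + 1) (f p) -
        birkhoffAverage ℝ f g (n + 1) p) l (𝓝 0) :=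
      ((tendsto_add_atTop_iff_nat 1).mpr
        (tendsto_birkhoffAverage_apply_sub_birkhoffAverage' ℝ g.isBounded_range f p)).mono_left hl
    convert (hν g).add hshift using 1
    · ext n
      rw [ProbabilityMeasure.toMeasure_map,
        integral_map hf.aemeasurable g.continuous.aestronglyMeasurable,
        integral_empiricalMeasure, integral_empiricalMeasure, add_sub_cancel,
        ← birkhoffAverage_comp_apply]
      rfl
    · rw [add_zero]
  have hmap_lim := (ProbabilityMeasure.continuous_map hf).continuousAt.tendsto.comp hν
  exact ⟨hf.measurable, congrArg ProbabilityMeasure.toMeasure (tendsto_nhds_unique hmap_lim hmap)⟩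

theorem integral_dist_eq_zero_of_measure_diagonal {X : Type*} [MetricSpace X]
    [MeasurableSpace (X × X)] [OpensMeasurableSpace (X × X)] (μ : Measure (X × X))
    [IsProbabilityMeasure μ] (hμ : μ (diagonal X) = 1) :
    ∫ q, dist q.1 q.2 ∂μ = 0 := by
  refine integral_eq_zero_of_ae ?_
  filter_upwards [(mem_ae_iff_prob_eq_one isClosed_diagonal.measurableSet).mpr hμ] with q hq
  exact dist_eq_zero.mpr hq

theorem birkhoffAvg_eq_birkhoffAverage {X : Type*} [PseudoMetricSpace X] (T : X → X) (x y : X)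
    (N : ℕ) :
    birkhoffAvg T x y N = birkhoffAverage ℝ (Prod.map T T) (fun q ↦ dist q.1 q.2) N (x, y) := by
  simp only [birkhoffAvg, div_eq_inv_mul, birkhoffAverage, birkhoffSum, Prod.map_iterate,
    Prod.map_apply, smul_eq_mul]

/-- If every `(T×T)`-invariant Borel probability measure on `X × X` gives full
measure to the diagonal, then `(X,T)` is mean asymptotic. -/
theorem meanAsymptotic_of_diagonal_full
    {X : Type*} [MetricSpace X] [CompactSpace X] [MeasurableSpace X] [BorelSpace X]
    (T : X → X) (hT : Continuous T)
    (h : ∀ ν : Measure (X × X), IsProbabilityMeasure ν →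
      (∀ B : Set (X × X), MeasurableSet B → ν (Prod.map T T ⁻¹' B) = ν B) →
      ν (Set.diagonal X) = 1) :
    ∀ x y : X, Tendsto (birkhoffAvg T x y) atTop (nhds 0) := by
  intro x y
  rw [← tendsto_add_atTop_iff_nat 1, tendsto_iff_ultrafilter]
  intro U hU
  obtain ⟨ν, -, hν⟩ := isCompact_univ.ultrafilter_le_nhds
    (U.map (empiricalMeasure (Prod.map T T) (x, y))) (by simp)
  have hinv := measurePreserving_of_tendsto_empiricalMeasure (hT.prodMap hT) hU hν
  have hdiag := h ν inferInstance fun B hB ↦ hinv.measure_preimage hB.nullMeasurableSet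
  have hdist := ProbabilityMeasure.tendsto_iff_forall_integral_tendsto.mp hν
    (mkOfCompact ⟨fun q : X × X ↦ dist q.1 q.2, by fun_prop⟩)
  simpa only [mkOfCompact_apply, ContinuousMap.coe_mk, integral_empiricalMeasure,
    ← birkhoffAvg_eq_birkhoffAverage, integral_dist_eq_zero_of_measure_diagonal _ hdiag]
    using hdist
end

section
/- Let (X,T) be a TDS such that the product system (X × X, T × T) is mean proximal. Then every (T×T)-invariant Borel probability measure λ on X × X satisfies λ(Δ_X) = 1, where Δ_X is the diagonal. -/
open Filter Metric Set MeasureTheory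

/-!
Put `g (x, y) = dist x y` and `S = T × T`. Mean proximality of the pair `(p, (p.2, p.2))` says
that the Birkhoff averages of `g` along the `S`-orbit of `p` have `liminf` zero, at every point `p`.
A stopping-time argument, as in the maximal ergodic theorem, turns this everywhere bound into
`∫ g dλ ≤ 0` for every `S`-invariant `λ`: fix `ε > 0` and `N`, and cut each orbit into blocks of
length at most `N` along which the average of `g` is below `ε`; this fails only at points where no
such block starts, and the measure of that set tends to `0` as `N → ∞`. Hence `g = 0` `λ`-a.e.
-/

section BirkhoffSum

variable {α : Type*} {f : α → α}

theorem birkhoffSum_le_of_forall_exists_birkhoffSum_nonpos {φ : α → ℝ} {C : ℝ} {N : ℕ}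
    (hC : 0 ≤ C) (hφ : ∀ x, φ x ≤ C)
    (hstop : ∀ x, ∃ n ∈ Finset.Icc 1 N, birkhoffSum f φ n x ≤ 0) (M : ℕ) (x : α) :
    birkhoffSum f φ M x ≤ N * C := by
  induction M using Nat.strong_induction_on generalizing x with
  | _ M ih =>
  obtain ⟨n, hn, hstop_x⟩ := hstop x
  rw [Finset.mem_Icc] at hn
  by_cases hnM : n ≤ M
  · obtain ⟨m, rfl⟩ := Nat.exists_eq_add_of_le hnM
    rw [birkhoffSum_add]
    linarith [ih m (by omega) (f^[n] x)]
  · calc birkhoffSum f φ M x ≤ ∑ _k ∈ Finset.range M, C := Finset.sum_le_sum fun k _ => hφ _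
      _ = M * C := by simp
      _ ≤ N * C := by gcongr; omega

theorem exists_birkhoffSum_lt_of_liminf_birkhoffAverage_nonpos {g : α → ℝ} {C : ℝ}
    (hg : ∀ x, g x ≤ C) {x : α} (hx : liminf (birkhoffAverage ℝ f g · x) atTop ≤ 0)
    {ε : ℝ} (hε : 0 < ε) : ∃ n, 1 ≤ n ∧ birkhoffSum f g n x < ε * n := by
  have hbdd : IsBoundedUnder (· ≤ ·) atTop (birkhoffAverage ℝ f g · x) := by
    refine ⟨C, eventually_atTop.2 ⟨1, fun n hn => ?_⟩⟩
    have hn' : (0 : ℝ) < n := by exact_mod_cast hn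
    calc birkhoffAverage ℝ f g n x = (n : ℝ)⁻¹ * birkhoffSum f g n x := rfl
      _ ≤ (n : ℝ)⁻¹ * ∑ _k ∈ Finset.range n, C := by
          gcongr; exact Finset.sum_le_sum fun k _ => hg _
      _ = C := by simp [hn'.ne']
  obtain ⟨n, hlt, hn⟩ := ((frequently_lt_of_liminf_lt hbdd.isCoboundedUnder_ge
    (hx.trans_lt hε)).and_eventually (eventually_ge_atTop 1)).exists
  have hn' : (0 : ℝ) < n := by exact_mod_cast hn
  refine ⟨n, hn, ?_⟩
  rwa [birkhoffAverage, smul_eq_mul, inv_mul_lt_iff₀ hn', mul_comm] at hlt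

def birkhoffSumGeSet (f : α → α) (g : α → ℝ) (ε : ℝ) (N : ℕ) : Set α :=
  {x | ∀ n ∈ Finset.Icc 1 N, ε * n ≤ birkhoffSum f g n x}

theorem antitone_birkhoffSumGeSet (g : α → ℝ) (ε : ℝ) : Antitone (birkhoffSumGeSet f g ε) :=
  fun _ _ hNN' _ hx n hn => hx n (Finset.Icc_subset_Icc_right hNN' hn)

theorem iInter_birkhoffSumGeSet_eq_empty {g : α → ℝ} {ε : ℝ}
    (h : ∀ x, ∃ n, 1 ≤ n ∧ birkhoffSum f g n x < ε * n) :
    ⋂ N, birkhoffSumGeSet f g ε N = ∅ := by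
  refine eq_empty_of_forall_notMem fun x hx => ?_
  obtain ⟨n, hn, hlt⟩ := h x
  exact (mem_iInter.1 hx n n (Finset.mem_Icc.2 ⟨hn, le_rfl⟩)).not_gt hlt

variable [MeasurableSpace α] {μ : Measure α}

theorem measurableSet_birkhoffSumGeSet (hf : Measurable f) {g : α → ℝ} (hg : Measurable g)
    (ε : ℝ) (N : ℕ) : MeasurableSet (birkhoffSumGeSet f g ε N) := by
  have hsum (n : ℕ) : Measurable (birkhoffSum f g n) :=
    Finset.measurable_sum _ fun k _ => hg.comp (hf.iterate k)
  simp only [birkhoffSumGeSet, ofPred_forall]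
  exact .biInter (Finset.countable_toSet _) fun n _ => measurableSet_le measurable_const (hsum n)

theorem MeasureTheory.MeasurePreserving.integrable_birkhoffSum (hf : MeasurePreserving f μ μ)
    {φ : α → ℝ} (hφ : Integrable φ μ) (n : ℕ) : Integrable (birkhoffSum f φ n) μ :=
  integrable_finsetSum _ fun k _ => (hf.iterate k).integrable_comp_of_integrable hφ

theorem MeasureTheory.MeasurePreserving.integral_birkhoffSum (hf : MeasurePreserving f μ μ)
    {φ : α → ℝ} (hφ : Integrable φ μ) (n : ℕ) :
    ∫ x, birkhoffSum f φ n x ∂μ = n * ∫ x, φ x ∂μ := by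
  have hcomp (k : ℕ) : ∫ x, φ (f^[k] x) ∂μ = ∫ x, φ x ∂μ := by
    have hmap := (hf.iterate k).map_eq
    rw [← integral_map (hf.iterate k).aemeasurable (by rw [hmap]; exact hφ.aestronglyMeasurable),
      hmap]
  have hint (k : ℕ) : Integrable (fun x => φ (f^[k] x)) μ :=
    (hf.iterate k).integrable_comp_of_integrable hφ
  simp only [birkhoffSum]
  rw [integral_finsetSum _ fun k _ => hint k]
  simp [hcomp]

theorem integral_nonpos_of_forall_exists_birkhoffSum_nonpos [IsFiniteMeasure μ]
    (hf : MeasurePreserving f μ μ) {φ : α → ℝ} (hφi : Integrable φ μ) {C : ℝ} {N : ℕ}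
    (hC : 0 ≤ C) (hφ : ∀ x, φ x ≤ C)
    (hstop : ∀ x, ∃ n ∈ Finset.Icc 1 N, birkhoffSum f φ n x ≤ 0) :
    ∫ x, φ x ∂μ ≤ 0 := by
  have hM (M : ℕ) : M * ∫ x, φ x ∂μ ≤ μ.real univ * (N * C) := by
    rw [← hf.integral_birkhoffSum hφi, ← smul_eq_mul, ← integral_const]
    exact integral_mono (hf.integrable_birkhoffSum hφi M) (integrable_const _)
      (birkhoffSum_le_of_forall_exists_birkhoffSum_nonpos hC hφ hstop M)
  refine ge_of_tendsto (tendsto_const_div_atTop_nhds_zero_nat (μ.real univ * (N * C)))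
    (eventually_atTop.2 ⟨1, fun M hM1 => ?_⟩)
  rw [le_div_iff₀ (by exact_mod_cast hM1), mul_comm]
  exact hM M

theorem integral_le_add_mul_measureReal_birkhoffSumGeSet [IsProbabilityMeasure μ]
    (hf : MeasurePreserving f μ μ) {g : α → ℝ} (hgm : Measurable g) (hgi : Integrable g μ)
    {C ε : ℝ} (hC : 0 ≤ C) (hg : ∀ x, g x ≤ C) (hε : 0 ≤ ε) {N : ℕ} (hN : 1 ≤ N) :
    ∫ x, g x ∂μ ≤ ε + C * μ.real (birkhoffSumGeSet f g ε N) := by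
  set F := birkhoffSumGeSet f g ε N
  have hF : MeasurableSet F := measurableSet_birkhoffSumGeSet hf.measurable hgm ε N
  have hind (x : α) : 0 ≤ F.indicator (fun _ => C) x := indicator_nonneg (fun _ _ => hC) x
  -- Charging `C` at the points of `F` lets every point start a block of length `≤ N` with
  -- nonpositive sum.
  set φ : α → ℝ := fun x => g x - ε - F.indicator (fun _ => C) x
  have hgεi : Integrable (fun x => g x - ε) μ := hgi.sub (integrable_const ε)
  have hφi : Integrable φ μ := hgεi.sub ((integrable_const C).indicator hF)
  have hstop (x : α) : ∃ n ∈ Finset.Icc 1 N, birkhoffSum f φ n x ≤ 0 := by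
    by_cases hx : x ∈ F
    · refine ⟨1, Finset.mem_Icc.2 ⟨le_rfl, hN⟩, ?_⟩
      simp only [birkhoffSum_one, φ, indicator_of_mem hx]
      linarith [hg x]
    · simp only [F, birkhoffSumGeSet, mem_ofPred_eq, not_forall, not_le] at hx
      obtain ⟨n, hn, hlt⟩ := hx
      refine ⟨n, hn, ?_⟩
      simp only [birkhoffSum, φ, Finset.sum_sub_distrib, Finset.sum_const, Finset.card_range,
        nsmul_eq_mul] at hlt ⊢
      linarith [Finset.sum_nonneg fun k (_ : k ∈ Finset.range n) => hind (f^[k] x)]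
  have hφ := integral_nonpos_of_forall_exists_birkhoffSum_nonpos hf hφi hC
    (fun x => by linarith [hg x, hind x]) hstop
  have hφint : ∫ x, φ x ∂μ = ∫ x, g x ∂μ - ε - μ.real F * C := by
    rw [integral_sub hgεi ((integrable_const C).indicator hF), integral_sub hgi (integrable_const ε),
      integral_const, integral_indicator_const C hF, probReal_univ, one_smul, smul_eq_mul]
  linarith

theorem integral_nonpos_of_forall_liminf_birkhoffAverage_nonpos [IsProbabilityMeasure μ]
    (hf : MeasurePreserving f μ μ) {g : α → ℝ} (hgm : Measurable g) (hgi : Integrable g μ)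
    {C : ℝ} (hg : ∀ x, g x ≤ C) (h : ∀ x, liminf (birkhoffAverage ℝ f g · x) atTop ≤ 0) :
    ∫ x, g x ∂μ ≤ 0 := by
  refine le_of_forall_pos_le_add fun ε hε => ?_
  have hmeas (N : ℕ) := measurableSet_birkhoffSumGeSet hf.measurable hgm ε N
  have hsmall : Tendsto (fun N => μ.real (birkhoffSumGeSet f g ε N)) atTop (nhds 0) := by
    have hlim := tendsto_measure_iInter_atTop (μ := μ) (fun N => (hmeas N).nullMeasurableSet)
      (antitone_birkhoffSumGeSet g ε) ⟨0, measure_ne_top μ _⟩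
    rw [iInter_birkhoffSumGeSet_eq_empty fun x =>
      exists_birkhoffSum_lt_of_liminf_birkhoffAverage_nonpos hg (h x) hε, measure_empty] at hlim
    exact (ENNReal.tendsto_toReal ENNReal.zero_ne_top).comp hlim
  have hbound : Tendsto (fun N => ε + max C 0 * μ.real (birkhoffSumGeSet f g ε N)) atTop
      (nhds (0 + ε)) := by
    simpa [add_comm] using (hsmall.const_mul (max C 0)).const_add ε
  exact ge_of_tendsto hbound (eventually_atTop.2 ⟨1, fun N hN =>
    integral_le_add_mul_measureReal_birkhoffSumGeSet hf hgm hgi (le_max_right C 0)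
      (fun x => (hg x).trans (le_max_left C 0)) hε.le hN⟩)

end BirkhoffSum

theorem birkhoffAvg_prodMap_eq_birkhoffAverage_dist {X : Type*} [PseudoMetricSpace X]
    (T : X → X) (u : X × X) :
    birkhoffAvg (Prod.map T T) u (u.2, u.2) =
      fun N => birkhoffAverage ℝ (Prod.map T T) (fun p => dist p.1 p.2) N u := by
  ext N
  simp only [birkhoffAvg, birkhoffAverage, birkhoffSum, Prod.map_iterate, Prod.map_fst,
    Prod.map_snd, Prod.dist_eq, dist_self, dist_nonneg, max_eq_left, smul_eq_mul, div_eq_inv_mul]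

theorem measure_diagonal_eq_one_of_integral_dist_nonpos {X : Type*} [MetricSpace X]
    [SecondCountableTopology X] [MeasurableSpace X] [BorelSpace X] {ν : Measure (X × X)}
    [IsProbabilityMeasure ν] (hint : Integrable (fun p : X × X => dist p.1 p.2) ν)
    (h : ∫ p, dist p.1 p.2 ∂ν ≤ 0) : ν (diagonal X) = 1 := by
  have hzero : (fun p : X × X => dist p.1 p.2) =ᵐ[ν] 0 :=
    (integral_eq_zero_iff_of_nonneg (fun _ => dist_nonneg) hint).1
      (h.antisymm (integral_nonneg fun _ => dist_nonneg))
  rw [← mem_ae_iff_prob_eq_one isClosed_diagonal.measurableSet]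
  filter_upwards [hzero] with p hp
  exact dist_eq_zero.1 hp

/-- If the product system `(X × X, T × T)` is mean proximal, then every
`(T×T)`-invariant Borel probability measure on `X × X` gives full measure to the
diagonal. -/
theorem diagonal_full_of_product_meanProximal
    {X : Type*} [MetricSpace X] [CompactSpace X] [MeasurableSpace X] [BorelSpace X]
    (T : X → X) (hT : Continuous T)
    (hmp : ∀ u v : X × X, MeanProximalPair (Prod.map T T) u v)
    (ν : Measure (X × X)) [IsProbabilityMeasure ν]
    (hinv : ∀ B : Set (X × X), MeasurableSet B → ν (Prod.map T T ⁻¹' B) = ν B) :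
    ν (Set.diagonal X) = 1 := by
  have hS : MeasurePreserving (Prod.map T T) ν ν := by
    refine ⟨(hT.prodMap hT).measurable, Measure.ext fun B hB => ?_⟩
    rw [Measure.map_apply (hT.prodMap hT).measurable hB, hinv B hB]
  have hdist : Continuous fun p : X × X => dist p.1 p.2 := continuous_fst.dist continuous_snd
  have hint : Integrable (fun p : X × X => dist p.1 p.2) ν :=
    hdist.integrable_of_hasCompactSupport (.of_compactSpace _)
  refine measure_diagonal_eq_one_of_integral_dist_nonpos hint ?_
  refine integral_nonpos_of_forall_liminf_birkhoffAverage_nonpos hS hdist.measurable hint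
    (fun p => dist_le_diam_of_mem isCompact_univ.isBounded (mem_univ p.1) (mem_univ p.2))
    fun u => ?_
  rw [← birkhoffAvg_prodMap_eq_birkhoffAverage_dist]
  exact (hmp u (u.2, u.2)).le
end
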